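/- arXiv:1903.11795 — 7 statements merged into one kernel-verified Lean document; each statement's English description precedes it below -/
import Mathlib

section
/- (Core generator-duality computation in the proof of Proposition 3.3.) Let K > 0 be real. For all n ∈ {0,1}, x ∈ {0,1}, y ∈ [0,1] and m ∈ ℕ₀ (with the conventions 0⁰ = 1 and m·y^{m-1} interpreted as 0 when m = 0): y·(y^m − 0^n·y^m)·𝟙_{x=0} + (1−y)·(0^n·y^m − y^m)·𝟙_{x=1} + K·(x−y)·x^n·m·y^{m−1} = K·m·x·y^{m−1} + n·y^{m+1} − (n + K·m)·x^n·y^m. In other words, the generator Ā of the jump-diffusion (X̄,Ȳ), applied to the duality function f(x,y) = x^n y^m as a function of (x,y), coincides with Σ_{(n̄,m̄)} Ḡ_{(n,m),(n̄,m̄)}·x^{n̄}·y^{m̄}, where Ḡ is the Q-matrix of the restricted ancient ancestral lines process; this identity establishes the moment duality of (N̄,M̄) and (X̄,Ȳ). -/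
/-- (Core generator-duality computation in the proof of Proposition 3.3.)
For `n ∈ {0,1}`, `x ∈ {0,1}`, `y ∈ [0,1]` and `m ∈ ℕ₀` (with the conventions `0⁰ = 1` and
`m·y^{m-1} = 0` for `m = 0`), the generator `Ā` of the jump-diffusion `(X̄,Ȳ)` applied to
the duality function `f(x,y) = xⁿyᵐ` equals `Σ_{(n̄,m̄)} Ḡ_{(n,m),(n̄,m̄)}·x^{n̄}·y^{m̄}`,
where `Ḡ` is the Q-matrix of the restricted ancient ancestral lines process. -/
theorem generator_duality_computation (K : ℝ) (hK : 0 < K)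
    (n : ℕ) (hn : n = 0 ∨ n = 1) (x : ℝ) (hx : x = 0 ∨ x = 1)
    (y : ℝ) (hy : y ∈ Set.Icc (0 : ℝ) 1) (m : ℕ) :
    y * (y ^ m - (0 : ℝ) ^ n * y ^ m) * (if x = 0 then 1 else 0) +
        (1 - y) * ((0 : ℝ) ^ n * y ^ m - y ^ m) * (if x = 1 then 1 else 0) +
        K * (x - y) * x ^ n * ((m : ℝ) * y ^ (m - 1)) =
      K * (m : ℝ) * x * y ^ (m - 1) + (n : ℝ) * y ^ (m + 1) -
        ((n : ℝ) + K * (m : ℝ)) * x ^ n * y ^ m := by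
  rcases m with _ | m
  · rcases hn with rfl | rfl <;> rcases hx with rfl | rfl <;> norm_num <;> ring
  · have h : (m + 1) - 1 = m := rfl
    rcases hn with rfl | rfl <;> rcases hx with rfl | rfl <;>
      simp [h, pow_succ] <;> push_cast <;> ring
end

section
/- (Claim in Step ii of Section 2.1.) Let E be a finite index type and let P and G be real E×E matrices satisfying P·P = P, P·G = G and G·P = G. Then for every t ≥ 0: P·exp(t·G) = exp(t·G)·P = P − I + exp(t·G), where I denotes the identity matrix. -/
open NormedSpace
open scoped Nat

section

variable {𝔸 : Type*} [NormedRing 𝔸] [NormedAlgebra ℚ 𝔸] [CompleteSpace 𝔸]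

/-- Only the constant term of the exponential series survives multiplication by `c`. -/
theorem mul_exp_eq_self_of_mul_eq_zero {c b : 𝔸} (h : c * b = 0) : c * exp b = c := by
  have hterm : ∀ n : ℕ, c * ((n !⁻¹ : ℚ) • b ^ n) = if n = 0 then c else 0 := by
    rintro (_ | n)
    · simp
    · rw [mul_smul_comm, pow_succ', ← mul_assoc, h, zero_mul, smul_zero, if_neg n.succ_ne_zero]
  have hsum := (exp_series_hasSum_exp' (𝕂 := ℚ) b).mul_left c
  simp only [hterm] at hsum
  exact hsum.unique (hasSum_ite_eq 0 c)

theorem mul_exp_eq_sub_one_add_exp_of_mul_eq {a b : 𝔸} (h : a * b = b) :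
    a * exp b = a - 1 + exp b := by
  have hkill : (a - 1) * exp b = a - 1 :=
    mul_exp_eq_self_of_mul_eq_zero (by rw [sub_mul, h, one_mul, sub_self])
  rw [sub_mul, one_mul] at hkill
  rw [← hkill, sub_add_cancel]

end

theorem projection_mul_exp_general (E : Type*) [Fintype E] [DecidableEq E]
    (P G : Matrix E E ℝ) (hPG : P * G = G) (hGP : G * P = G)
    (t : ℝ) :
    P * NormedSpace.exp (t • G) = NormedSpace.exp (t • G) * P ∧
      P * NormedSpace.exp (t • G) = P - 1 + NormedSpace.exp (t • G) := by
  have hPtG : P * (t • G) = t • G := by rw [mul_smul_comm, hPG]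
  have htGP : t • G * P = t • G := by rw [smul_mul_assoc, hGP]
  -- `exp` is defined without a norm; any complete algebra norm serves to apply the lemma.
  open scoped Matrix.Norms.Operator in
  exact ⟨(Commute.exp_right (hPtG.trans htGP.symm)).eq, mul_exp_eq_sub_one_add_exp_of_mul_eq hPtG⟩

/-- (Claim in Step ii of Section 2.1.) If `P` is a projection
(`P·P = P`) with `P·G = G` and `G·P = G`, then for every `t ≥ 0`,
`P·exp(t·G) = exp(t·G)·P = P − I + exp(t·G)`. -/
theorem projection_mul_exp (E : Type*) [Fintype E] [DecidableEq E]
    (P G : Matrix E E ℝ) (hP : P * P = P) (hPG : P * G = G) (hGP : G * P = G)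
    (t : ℝ) (ht : 0 ≤ t) :
    P * NormedSpace.exp (t • G) = NormedSpace.exp (t • G) * P ∧
      P * NormedSpace.exp (t • G) = P - 1 + NormedSpace.exp (t • G) :=
  projection_mul_exp_general E P G hPG hGP t
end

section
/- (The family Π(t) = P·exp(tG) is a (non-standard) semigroup; claim in Step ii of Section 2.1.) Let E be a finite index type and let P and G be real E×E matrices satisfying P·P = P, P·G = G and G·P = G. Then for all s, t > 0: (P·exp(s·G))·(P·exp(t·G)) = P·exp((s+t)·G). Consequently, setting Π(t) := P·exp(t·G) for t > 0 and Π(0) := I (the identity matrix), the family (Π(t))_{t ≥ 0} satisfies Π(s)·Π(t) = Π(s+t) for all s, t ≥ 0. -/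
/-!
Since `P * G = G = G * P`, the idempotent `P` commutes with `G` and hence with every `exp (u • G)`.
So `P * exp (s • G) * P * exp (t • G) = P * P * exp (s • G) * exp (t • G) = P * exp ((s + t) • G)`,
the last step because `s • G` and `t • G` commute. At `u = 0` the identity is a two-sided unit,
so the semigroup law on `(0, ∞)` extends to `[0, ∞)`.
-/

open NormedSpace

theorem IsIdempotentElem.mul_mul_mul_of_commute {S : Type*} [Semigroup S] {p x y : S}
    (hp : IsIdempotentElem p) (hx : Commute p x) : p * x * (p * y) = p * (x * y) :=
  calc p * x * (p * y) = p * (x * p) * y := by simp only [mul_assoc]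
    _ = p * p * x * y := by rw [← hx.eq, mul_assoc p p]
    _ = p * (x * y) := by rw [hp.eq, mul_assoc]

theorem Matrix.exp_add_smul {m 𝕂 : Type*} [Fintype m] [DecidableEq m] [RCLike 𝕂]
    (A : Matrix m m 𝕂) (s t : 𝕂) : exp ((s + t) • A) = exp (s • A) * exp (t • A) := by
  rw [add_smul, Matrix.exp_add_of_commute]
  exact ((Commute.refl A).smul_left s).smul_right t

theorem Matrix.mul_exp_smul_mul_mul_exp_smul {m 𝕂 : Type*} [Fintype m] [DecidableEq m] [RCLike 𝕂]
    {P A : Matrix m m 𝕂} (hP : IsIdempotentElem P) (hPA : Commute P A) (s t : 𝕂) :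
    P * exp (s • A) * (P * exp (t • A)) = P * exp ((s + t) • A) := by
  rw [hP.mul_mul_mul_of_commute (hPA.smul_right s).exp_right, Matrix.exp_add_smul]

theorem ite_eq_zero_one_mul_of_pos {M : Type*} [MulOneClass M] {f : ℝ → M}
    (hf : ∀ s t, 0 < s → 0 < t → f s * f t = f (s + t)) {s t : ℝ} (hs : 0 ≤ s) (ht : 0 ≤ t) :
    (if s = 0 then 1 else f s) * (if t = 0 then 1 else f t) =
      if s + t = 0 then 1 else f (s + t) := by
  rcases hs.eq_or_lt with rfl | hs
  · simp
  rcases ht.eq_or_lt with rfl | ht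
  · simp
  rw [if_neg hs.ne', if_neg ht.ne', if_neg (add_pos hs ht).ne', hf s t hs ht]

/-- (The family `Π(t) = P·exp(t·G)` is a (non-standard) semigroup;
claim in Step ii of Section 2.1.) If `P·P = P`, `P·G = G` and `G·P = G`, then
`(P·exp(s·G))·(P·exp(t·G)) = P·exp((s+t)·G)` for all `s, t > 0`; consequently, with
`Π(t) := P·exp(t·G)` for `t > 0` and `Π(0) := I`, one has `Π(s)·Π(t) = Π(s+t)` for all
`s, t ≥ 0`. -/
theorem projection_exp_semigroup (E : Type*) [Fintype E] [DecidableEq E]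
    (P G : Matrix E E ℝ) (hP : P * P = P) (hPG : P * G = G) (hGP : G * P = G) :
    (∀ s t : ℝ, 0 < s → 0 < t →
        (P * NormedSpace.exp (s • G)) * (P * NormedSpace.exp (t • G)) =
          P * NormedSpace.exp ((s + t) • G)) ∧
      ∀ s t : ℝ, 0 ≤ s → 0 ≤ t →
        (fun u : ℝ => if u = 0 then (1 : Matrix E E ℝ) else P * NormedSpace.exp (u • G)) s *
            (fun u : ℝ => if u = 0 then (1 : Matrix E E ℝ) else P * NormedSpace.exp (u • G)) t =
          (fun u : ℝ => if u = 0 then (1 : Matrix E E ℝ) else P * NormedSpace.exp (u • G))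
            (s + t) := by
  have semigroup : ∀ s t : ℝ, P * exp (s • G) * (P * exp (t • G)) = P * exp ((s + t) • G) :=
    Matrix.mul_exp_smul_mul_mul_exp_smul hP (hPG.trans hGP.symm)
  exact ⟨fun s t _ _ => semigroup s t,
    fun s t => ite_eq_zero_one_mul_of_pos fun s t _ _ => semigroup s t⟩
end

section
/- (Condition (eq:cond2_spec) in the proof of Theorem 1.3: convergence of the fast coalescence part to the projection.) Let (c_κ)_{κ∈ℕ} be any sequence of reals with 0 < c_κ, s(s−1)c_κ²/2 ≤ 1 and c_κ → 0. Then lim_{C→∞} lim_{κ→∞} sup { ‖(A_{c_κ})^r − P‖ : r ∈ ℕ, r ≥ C·c_κ^{-2} } = 0; precisely, for every ε > 0 there exists C₀ > 0 such that for all C ≥ C₀ there exists κ₀ with: for all κ ≥ κ₀ and all natural numbers r ≥ C·c_κ^{-2}, ‖(A_{c_κ})^r − P‖ ≤ ε. -/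
open scoped Topology

/-- The state space `S = {(n,m) ∈ ℕ₀ × ℕ₀ : n + m ≤ s}`, realized as a finite type. -/
abbrev SBState (s : ℕ) : Type := {p : Fin (s + 1) × Fin (s + 1) // (p.1 : ℕ) + (p.2 : ℕ) ≤ s}

namespace SBState

variable {s : ℕ}

/-- First coordinate (number of active blocks). -/
def n (e : SBState s) : ℕ := (e.1.1 : ℕ)

/-- Second coordinate (number of dormant blocks). -/
def m (e : SBState s) : ℕ := (e.1.2 : ℕ)

end SBState

/-- The Q-matrix `G^c` of the block-counting process of the seed bank coalescent with
migration rate `c`. -/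
noncomputable def seedBankQ (s : ℕ) (K c : ℝ) : Matrix (SBState s) (SBState s) ℝ :=
  fun e f =>
    if f.n + 1 = e.n ∧ f.m = e.m then (e.n * (e.n - 1) : ℝ) / 2
    else if f.n + 1 = e.n ∧ f.m = e.m + 1 then c * e.n
    else if f.n = e.n + 1 ∧ f.m + 1 = e.m then c * K * e.m
    else if f.n = e.n ∧ f.m = e.m then -(e.n * (e.n - 1) : ℝ) / 2 - c * e.n - c * K * e.m
    else 0

/-- The projection matrix `P` onto the effective state space of the ancient ancestral
lines process. -/
noncomputable def ancientP (s : ℕ) : Matrix (SBState s) (SBState s) ℝ :=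
  fun e f =>
    if 1 ≤ e.n ∧ f.n = 1 ∧ f.m = e.m then 1
    else if e.n = 0 ∧ f.n = 0 ∧ f.m = e.m then 1
    else 0

/-- The matrix `G`, the generator part of the ancient ancestral lines process. -/
noncomputable def ancientG (s : ℕ) (K : ℝ) : Matrix (SBState s) (SBState s) ℝ :=
  fun e f =>
    if f.n = 1 ∧ f.m + 1 = e.m then K * e.m
    else if 1 ≤ e.n ∧ f.n = 0 ∧ f.m = e.m + 1 then (e.n : ℝ)
    else if 1 ≤ e.n ∧ f.n = 1 ∧ f.m = e.m then -(e.n : ℝ) - K * e.m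
    else if e.n = 0 ∧ f.n = 0 ∧ f.m = e.m then -K * (e.m : ℝ)
    else 0

instance (s : ℕ) : Nonempty (SBState s) :=
  ⟨⟨(0, 0), by simp⟩⟩

/-- The matrix `A_c`: the fast (coalescence) part of the one-step transition matrix of the
discretized chain, over a time step of length `c²`. -/
noncomputable def coalA (s : ℕ) (c : ℝ) : Matrix (SBState s) (SBState s) ℝ :=
  fun e f =>
    if 2 ≤ e.n ∧ f.n + 1 = e.n ∧ f.m = e.m then (e.n * (e.n - 1) : ℝ) * c ^ 2 / 2
    else if f.n = e.n ∧ f.m = e.m then 1 - (e.n * (e.n - 1) : ℝ) * c ^ 2 / 2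
    else 0

/-- The matrix norm `‖A‖ = max_{e∈S} Σ_{f∈S} |A_{e,f}|`. -/
noncomputable def matNorm {s : ℕ} (A : Matrix (SBState s) (SBState s) ℝ) : ℝ :=
  Finset.univ.sup' Finset.univ_nonempty fun e => ∑ f : SBState s, |A e f|

namespace CoalAux

variable {s : ℕ}

lemma sb_ext {f g : SBState s} (h1 : f.n = g.n) (h2 : f.m = g.m) : f = g :=
  Subtype.ext (Prod.ext (Fin.ext h1) (Fin.ext h2))

lemma nm_le (e : SBState s) : e.n + e.m ≤ s := e.2

/-- the "down" state `(n-1, m)`. -/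
def dn (e : SBState s) : SBState s :=
  ⟨(⟨e.n - 1, by have := nm_le e; omega⟩, e.1.2), by
    have := nm_le e
    show e.n - 1 + e.m ≤ s
    omega⟩

lemma dn_n (e : SBState s) : (dn e).n = e.n - 1 := rfl
lemma dn_m (e : SBState s) : (dn e).m = e.m := rfl

/-- the "target" state `(min 1 n, m)`; equals `(1,m)` when `n ≥ 1`. -/
def g1 (e : SBState s) : SBState s :=
  ⟨(⟨min 1 e.n, by have := nm_le e; omega⟩, e.1.2), by
    have := nm_le e
    show min 1 e.n + e.m ≤ s
    omega⟩

lemma g1_n (e : SBState s) : (g1 e).n = min 1 e.n := rfl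
lemma g1_m (e : SBState s) : (g1 e).m = e.m := rfl

lemma coalA_apply_low {c : ℝ} {e : SBState s} (he : e.n ≤ 1) (f : SBState s) :
    coalA s c e f = if f = e then 1 else 0 := by
  have hz : ((e.n : ℝ) * ((e.n : ℝ) - 1)) = 0 := by
    interval_cases h : e.n <;> norm_num
  unfold coalA
  by_cases hfe : f = e
  · subst hfe
    rw [if_neg (by omega), if_pos ⟨rfl, rfl⟩, if_pos rfl]
    rw [hz]; ring
  · rw [if_neg (by omega), if_neg, if_neg hfe]
    rintro ⟨h1, h2⟩
    exact hfe (sb_ext h1 h2)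

lemma coalA_apply_high {c : ℝ} {e : SBState s} (he : 2 ≤ e.n) (f : SBState s) :
    coalA s c e f =
      (if f = dn e then (e.n * (e.n - 1) : ℝ) * c ^ 2 / 2 else 0) +
      (if f = e then 1 - (e.n * (e.n - 1) : ℝ) * c ^ 2 / 2 else 0) := by
  have hdne : dn e ≠ e := by
    intro h
    have := congrArg SBState.n h
    rw [dn_n] at this; omega
  unfold coalA
  by_cases hfd : f = dn e
  · subst hfd
    rw [if_pos ⟨he, by rw [dn_n]; omega, dn_m e⟩, if_pos rfl, if_neg hdne]
    ring
  · by_cases hfe : f = e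
    · subst hfe
      rw [if_neg (by rintro ⟨_, h, _⟩; omega), if_pos ⟨rfl, rfl⟩, if_neg hfd, if_pos rfl]
      ring
    · rw [if_neg, if_neg, if_neg hfd, if_neg hfe]
      · norm_num
      · rintro ⟨h1, h2⟩; exact hfe (sb_ext h1 h2)
      · rintro ⟨_, h1, h2⟩
        exact hfd (sb_ext (by rw [dn_n]; omega) (by rw [dn_m]; exact h2))

lemma nn_nonneg (n : ℕ) : (0:ℝ) ≤ (n:ℝ) * ((n:ℝ) - 1) := by
  rcases n with _ | k
  · norm_num
  · have : (1:ℝ) ≤ ((k+1 : ℕ) : ℝ) := by exact_mod_cast Nat.one_le_iff_ne_zero.2 (by omega)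
    nlinarith

lemma nn_mono {n : ℕ} (h : n ≤ s) : (n:ℝ) * ((n:ℝ) - 1) ≤ (s:ℝ) * ((s:ℝ) - 1) := by
  rcases n with _ | k
  · simpa using nn_nonneg s
  · have h1 : (1:ℝ) ≤ ((k+1 : ℕ) : ℝ) := by exact_mod_cast Nat.one_le_iff_ne_zero.2 (by omega)
    have h2 : ((k+1 : ℕ) : ℝ) ≤ (s:ℝ) := by exact_mod_cast h
    nlinarith

section WithC

variable {c : ℝ}

lemma p_nonneg (e : SBState s) : 0 ≤ (e.n : ℝ) * ((e.n : ℝ) - 1) * c ^ 2 / 2 := by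
  have := nn_nonneg e.n
  positivity

lemma p_le_one (hbd : (s : ℝ) * ((s : ℝ) - 1) * c ^ 2 / 2 ≤ 1) (e : SBState s) :
    (e.n : ℝ) * ((e.n : ℝ) - 1) * c ^ 2 / 2 ≤ 1 := by
  have h1 := nn_mono (le_trans (Nat.le_add_right _ _) (nm_le e))
  have h2 : (0:ℝ) ≤ c ^ 2 / 2 := by positivity
  nlinarith

lemma coalA_nonneg (hbd : (s : ℝ) * ((s : ℝ) - 1) * c ^ 2 / 2 ≤ 1) (e f : SBState s) :
    0 ≤ coalA s c e f := by
  unfold coalA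
  split_ifs
  · exact p_nonneg e
  · linarith [p_le_one hbd e]
  · exact le_rfl

lemma coalA_row_sum (e : SBState s) : ∑ f, coalA s c e f = 1 := by
  by_cases he : 2 ≤ e.n
  · rw [Finset.sum_congr rfl fun f _ => coalA_apply_high he f, Finset.sum_add_distrib]
    rw [Finset.sum_ite_eq' Finset.univ (dn e), Finset.sum_ite_eq' Finset.univ e]
    simp
  · rw [Finset.sum_congr rfl fun f _ => coalA_apply_low (by omega) f]
    rw [Finset.sum_ite_eq' Finset.univ e]
    simp

lemma coalA_support {e g : SBState s} (he : 1 ≤ e.n) (hg : coalA s c e g ≠ 0) :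
    1 ≤ g.n ∧ g.m = e.m := by
  unfold coalA at hg
  split_ifs at hg with h1 h2
  · exact ⟨by omega, h1.2.2⟩
  · exact ⟨by omega, h2.2⟩
  · exact absurd rfl hg

lemma pow_low {e : SBState s} (he : e.n ≤ 1) (r : ℕ) (f : SBState s) :
    (coalA s c ^ r) e f = if f = e then 1 else 0 := by
  induction r with
  | zero =>
    rw [pow_zero, Matrix.one_apply]
    simp [eq_comm]
  | succ r ih =>
    rw [pow_succ', Matrix.mul_apply]
    rw [Finset.sum_congr rfl fun g _ => by rw [coalA_apply_low he g, ite_mul, one_mul, zero_mul]]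
    rw [Finset.sum_ite_eq' Finset.univ e]
    simpa using ih

lemma pow_nonneg' (hbd : (s : ℝ) * ((s : ℝ) - 1) * c ^ 2 / 2 ≤ 1) (r : ℕ) (e f : SBState s) :
    0 ≤ (coalA s c ^ r) e f := by
  induction r generalizing e f with
  | zero => rw [pow_zero, Matrix.one_apply]; split_ifs <;> norm_num
  | succ r ih =>
    rw [pow_succ', Matrix.mul_apply]
    exact Finset.sum_nonneg fun g _ => mul_nonneg (coalA_nonneg hbd e g) (ih g f)

lemma pow_row_sum (r : ℕ) (e : SBState s) : ∑ f, (coalA s c ^ r) e f = 1 := by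
  induction r generalizing e with
  | zero => simp [Matrix.one_apply]
  | succ r ih =>
    rw [Finset.sum_congr rfl fun f _ => by rw [pow_succ', Matrix.mul_apply]]
    rw [Finset.sum_comm]
    rw [Finset.sum_congr rfl fun g _ => by rw [← Finset.mul_sum, ih g, mul_one]]
    exact coalA_row_sum e

lemma pow_vanish {e f : SBState s} (he : 1 ≤ e.n) (hf : f.n = 0 ∨ f.m ≠ e.m) (r : ℕ) :
    (coalA s c ^ r) e f = 0 := by
  induction r generalizing e with
  | zero =>
    rw [pow_zero, Matrix.one_apply, if_neg]
    intro h; subst h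
    rcases hf with h | h
    · omega
    · exact h rfl
  | succ r ih =>
    rw [pow_succ', Matrix.mul_apply]
    apply Finset.sum_eq_zero
    intro g _
    by_cases hg : coalA s c e g = 0
    · rw [hg, zero_mul]
    · obtain ⟨hg1, hg2⟩ := coalA_support he hg
      rw [ih hg1 (by rw [hg2]; exact hf), mul_zero]

end WithC

/-- the Lyapunov function -/
noncomputable def wv (f : SBState s) : ℝ := if 2 ≤ f.n then 2 ^ f.n else 0

lemma wv_nonneg (f : SBState s) : 0 ≤ wv f := by
  unfold wv; split_ifs <;> positivity

lemma wv_le (f : SBState s) : wv f ≤ 2 ^ f.n := by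
  unfold wv; split_ifs
  · exact le_rfl
  · positivity

end CoalAux
namespace CoalAux

variable {s : ℕ} {c : ℝ}

lemma step_lyap (hbd : (s : ℝ) * ((s : ℝ) - 1) * c ^ 2 / 2 ≤ 1) (e : SBState s) :
    ∑ f, coalA s c e f * wv f ≤ max (1 - c ^ 2 / 2) 0 * wv e := by
  set t := max (1 - c ^ 2 / 2) 0 with ht
  by_cases he : 2 ≤ e.n
  · have hsum : ∑ f, coalA s c e f * wv f
        = (e.n * (e.n - 1) : ℝ) * c ^ 2 / 2 * wv (dn e)
          + (1 - (e.n * (e.n - 1) : ℝ) * c ^ 2 / 2) * wv e := by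
      rw [Finset.sum_congr rfl fun f _ => congrArg (· * wv f) (coalA_apply_high he f)]
      simp only [add_mul, ite_mul, zero_mul]
      rw [Finset.sum_add_distrib, Finset.sum_ite_eq' Finset.univ (dn e),
        Finset.sum_ite_eq' Finset.univ e]
      simp
    rw [hsum]
    set p := (e.n : ℝ) * ((e.n : ℝ) - 1) * c ^ 2 / 2 with hp
    have hwe : wv e = 2 ^ e.n := by unfold wv; rw [if_pos he]
    have hwd : wv (dn e) ≤ 2 ^ (e.n - 1) := le_trans (wv_le _) (by rw [dn_n])
    have hwd0 : 0 ≤ wv (dn e) := wv_nonneg _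
    have hp0 : 0 ≤ p := p_nonneg e
    have hp1 : p ≤ 1 := p_le_one hbd e
    have hpc : c ^ 2 ≤ p := by
      have h2 : (2:ℝ) ≤ (e.n : ℝ) := by exact_mod_cast he
      rw [hp]
      nlinarith [mul_nonneg (mul_nonneg (sub_nonneg.2 h2)
        (by linarith : (0:ℝ) ≤ (e.n : ℝ) + 1)) (sq_nonneg c)]
    have h2n : (2:ℝ) ^ e.n = 2 * 2 ^ (e.n - 1) := by
      rw [← pow_succ']; congr 1; omega
    have htg : 1 - c ^ 2 / 2 ≤ t := le_max_left _ _
    have hpow : (0:ℝ) ≤ 2 ^ (e.n - 1) := by positivity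
    rw [hwe, h2n]
    nlinarith [mul_le_mul_of_nonneg_left hwd hp0,
      mul_le_mul_of_nonneg_right hpc hpow,
      mul_le_mul_of_nonneg_right htg (by positivity : (0:ℝ) ≤ 2 * 2 ^ (e.n - 1))]
  · have hsum : ∑ f, coalA s c e f * wv f = wv e := by
      rw [Finset.sum_congr rfl fun f _ => congrArg (· * wv f) (coalA_apply_low (by omega) f)]
      simp only [ite_mul, one_mul, zero_mul]
      rw [Finset.sum_ite_eq' Finset.univ e]
      simp
    rw [hsum]
    have hwe : wv e = 0 := by unfold wv; rw [if_neg he]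
    simp [hwe]

lemma pow_lyap (hbd : (s : ℝ) * ((s : ℝ) - 1) * c ^ 2 / 2 ≤ 1) (r : ℕ) (e : SBState s) :
    ∑ f, (coalA s c ^ r) e f * wv f ≤ max (1 - c ^ 2 / 2) 0 ^ r * wv e := by
  set t := max (1 - c ^ 2 / 2) 0 with ht
  have ht0 : 0 ≤ t := le_max_right _ _
  induction r generalizing e with
  | zero =>
    rw [pow_zero, pow_zero, one_mul]
    rw [Finset.sum_congr rfl fun f _ => by rw [Matrix.one_apply, ite_mul, one_mul, zero_mul]]
    rw [Finset.sum_ite_eq Finset.univ e]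
    simp
  | succ r ih =>
    have key : ∑ f, (coalA s c ^ (r+1)) e f * wv f
        = ∑ g, coalA s c e g * ∑ f, (coalA s c ^ r) g f * wv f := by
      simp only [pow_succ', Matrix.mul_apply, Finset.sum_mul, Finset.mul_sum]
      rw [Finset.sum_comm]
      exact Finset.sum_congr rfl fun g _ => Finset.sum_congr rfl fun f _ => by ring
    rw [key]
    calc ∑ g, coalA s c e g * ∑ f, (coalA s c ^ r) g f * wv f
        ≤ ∑ g, coalA s c e g * (t ^ r * wv g) :=
          Finset.sum_le_sum fun g _ =>
            mul_le_mul_of_nonneg_left (ih g) (coalA_nonneg hbd e g)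
      _ = t ^ r * ∑ g, coalA s c e g * wv g := by
          rw [Finset.mul_sum]; exact Finset.sum_congr rfl fun g _ => by ring
      _ ≤ t ^ r * (t * wv e) :=
          mul_le_mul_of_nonneg_left (step_lyap hbd e) (pow_nonneg ht0 r)
      _ = t ^ (r + 1) * wv e := by ring

end CoalAux
namespace CoalAux

variable {s : ℕ} {c : ℝ}

lemma ancientP_low {e : SBState s} (he : e.n ≤ 1) (f : SBState s) :
    ancientP s e f = if f = e then 1 else 0 := by
  unfold ancientP
  rcases Nat.lt_or_ge e.n 1 with h0 | h1
  · have h0 : e.n = 0 := by omega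
    rw [if_neg (by omega)]
    by_cases hfe : f = e
    · subst hfe; rw [if_pos ⟨h0, h0, rfl⟩, if_pos rfl]
    · rw [if_neg, if_neg hfe]
      rintro ⟨-, ha, hb⟩; exact hfe (sb_ext (by omega) hb)
  · have h1' : e.n = 1 := by omega
    by_cases hfe : f = e
    · subst hfe; rw [if_pos ⟨h1, h1', rfl⟩, if_pos rfl]
    · rw [if_neg, if_neg (by omega), if_neg hfe]
      rintro ⟨-, ha, hb⟩; exact hfe (sb_ext (by omega) hb)

lemma ancientP_high {e : SBState s} (he : 1 ≤ e.n) (f : SBState s) :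
    ancientP s e f = if f = g1 e then 1 else 0 := by
  have hg1n : (g1 e).n = 1 := by rw [g1_n]; omega
  unfold ancientP
  by_cases hf : f = g1 e
  · subst hf; rw [if_pos ⟨he, hg1n, g1_m e⟩, if_pos rfl]
  · rw [if_neg, if_neg (by omega), if_neg hf]
    rintro ⟨-, ha, hb⟩
    exact hf (sb_ext (by rw [hg1n]; exact ha) (by rw [g1_m]; exact hb))

lemma row_bound (hbd : (s : ℝ) * ((s : ℝ) - 1) * c ^ 2 / 2 ≤ 1) (r : ℕ) (e : SBState s) :
    ∑ f, |(coalA s c ^ r - ancientP s) e f| ≤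
      2 * 2 ^ s * max (1 - c ^ 2 / 2) 0 ^ r := by
  set t := max (1 - c ^ 2 / 2) 0 with ht
  have ht0 : (0:ℝ) ≤ t := le_max_right _ _
  by_cases he : 2 ≤ e.n
  · have he1 : 1 ≤ e.n := by omega
    set g := g1 e with hg
    have hgn : g.n = 1 := by rw [hg, g1_n]; omega
    have hgm : g.m = e.m := g1_m e
    have hq : ∑ f ∈ Finset.univ.erase g, (coalA s c ^ r) e f ≤ 2 ^ s * t ^ r := by
      calc ∑ f ∈ Finset.univ.erase g, (coalA s c ^ r) e f
          ≤ ∑ f ∈ Finset.univ.erase g, (coalA s c ^ r) e f * wv f := by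
            apply Finset.sum_le_sum
            intro f hf
            by_cases h2 : 2 ≤ f.n
            · have h1w : (1:ℝ) ≤ wv f := by
                unfold wv; rw [if_pos h2]
                exact one_le_pow₀ one_le_two
              exact le_mul_of_one_le_right (pow_nonneg' hbd r e f) h1w
            · have hf0 : (coalA s c ^ r) e f = 0 := by
                rcases Nat.lt_or_ge f.n 1 with h0 | h1
                · exact pow_vanish he1 (Or.inl (by omega)) r
                · by_cases hm : f.m = e.m
                  · exact absurd (sb_ext (by omega) (by rw [hm, ← hgm]))
                      (Finset.ne_of_mem_erase hf)
                  · exact pow_vanish he1 (Or.inr hm) r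
              rw [hf0, zero_mul]
        _ ≤ ∑ f, (coalA s c ^ r) e f * wv f :=
            Finset.sum_le_sum_of_subset_of_nonneg (Finset.erase_subset _ _)
              (fun f _ _ => mul_nonneg (pow_nonneg' hbd r e f) (wv_nonneg f))
        _ ≤ t ^ r * wv e := pow_lyap hbd r e
        _ ≤ 2 ^ s * t ^ r := by
            have h1 : wv e ≤ 2 ^ s := le_trans (wv_le e)
              (pow_le_pow_right₀ one_le_two (le_trans (Nat.le_add_right _ _) (nm_le e)))
            calc t ^ r * wv e ≤ t ^ r * 2 ^ s :=
                  mul_le_mul_of_nonneg_left h1 (pow_nonneg ht0 r)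
              _ = 2 ^ s * t ^ r := mul_comm _ _
    have hq0 : 0 ≤ ∑ f ∈ Finset.univ.erase g, (coalA s c ^ r) e f :=
      Finset.sum_nonneg fun f _ => pow_nonneg' hbd r e f
    have hsum_split : (coalA s c ^ r) e g
        + ∑ f ∈ Finset.univ.erase g, (coalA s c ^ r) e f = 1 := by
      rw [Finset.add_sum_erase Finset.univ _ (Finset.mem_univ g)]
      exact pow_row_sum r e
    have hsplit : ∑ f, |(coalA s c ^ r - ancientP s) e f|
        = |(coalA s c ^ r) e g - 1|
          + ∑ f ∈ Finset.univ.erase g, (coalA s c ^ r) e f := by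
      rw [← Finset.add_sum_erase Finset.univ _ (Finset.mem_univ g)]
      congr 1
      · rw [Matrix.sub_apply, ancientP_high he1 g, if_pos rfl]
      · apply Finset.sum_congr rfl
        intro f hf
        rw [Matrix.sub_apply, ancientP_high he1 f, if_neg (Finset.ne_of_mem_erase hf),
          sub_zero, abs_of_nonneg (pow_nonneg' hbd r e f)]
    have habs : |(coalA s c ^ r) e g - 1|
        = ∑ f ∈ Finset.univ.erase g, (coalA s c ^ r) e f := by
      rw [abs_of_nonpos (by linarith)]
      linarith
    rw [hsplit, habs]
    linarith
  · have hz : ∀ f, (coalA s c ^ r - ancientP s) e f = 0 := by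
      intro f
      rw [Matrix.sub_apply, pow_low (by omega) r f, ancientP_low (by omega) f, sub_self]
    rw [Finset.sum_congr rfl fun f _ => by rw [hz f, abs_zero]]
    rw [Finset.sum_const, smul_zero]
    exact mul_nonneg (by positivity) (pow_nonneg ht0 r)

end CoalAux

/-- (Condition (eq:cond2_spec) in the proof of Theorem 1.3.) For any
sequence `c_κ → 0` of positive reals with `s(s−1)c_κ²/2 ≤ 1`, we have
`lim_{C→∞} lim_{κ→∞} sup_{r ≥ C·c_κ⁻²} ‖(A_{c_κ})^r − P‖ = 0`. -/
theorem coalA_pow_tendsto_projection (s : ℕ) (hs : 1 ≤ s) (K : ℝ) (hK : 0 < K)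
    (c : ℕ → ℝ) (hpos : ∀ κ, 0 < c κ)
    (hbd : ∀ κ, (s : ℝ) * ((s : ℝ) - 1) * c κ ^ 2 / 2 ≤ 1)
    (hc : Filter.Tendsto c Filter.atTop (𝓝 0)) :
    ∀ ε > (0 : ℝ), ∃ C₀ > (0 : ℝ), ∀ C ≥ C₀, ∃ κ₀ : ℕ, ∀ κ ≥ κ₀,
      ∀ r : ℕ, C / c κ ^ 2 ≤ (r : ℝ) →
        matNorm (coalA s (c κ) ^ r - ancientP s) ≤ ε := by
  intro ε hε
  set B : ℝ := 2 * 2 ^ s with hB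
  have hB0 : (0:ℝ) < B := by positivity
  refine ⟨max 1 (2 * Real.log (B / ε)), lt_of_lt_of_le one_pos (le_max_left _ _), ?_⟩
  intro C hC
  refine ⟨0, fun κ _ r hr => ?_⟩
  have hcκ := hpos κ
  have hbdκ := hbd κ
  set t := max (1 - c κ ^ 2 / 2) 0 with ht
  have ht0 : (0:ℝ) ≤ t := le_max_right _ _
  have h1 : matNorm (coalA s (c κ) ^ r - ancientP s) ≤ B * t ^ r := by
    unfold matNorm
    exact Finset.sup'_le _ _ fun e _ => CoalAux.row_bound hbdκ r e
  have h2 : t ≤ Real.exp (-(c κ ^ 2 / 2)) := by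
    apply max_le
    · linarith [Real.add_one_le_exp (-(c κ ^ 2 / 2))]
    · exact (Real.exp_pos _).le
  have h3 : t ^ r ≤ Real.exp (-(c κ ^ 2 / 2)) ^ r := pow_le_pow_left₀ ht0 h2 r
  have h4 : Real.exp (-(c κ ^ 2 / 2)) ^ r = Real.exp ((r : ℝ) * (-(c κ ^ 2 / 2))) :=
    (Real.exp_nat_mul _ r).symm
  have hrc : C ≤ (r : ℝ) * c κ ^ 2 := by
    rw [div_le_iff₀ (by positivity)] at hr
    linarith
  have h5 : Real.exp ((r : ℝ) * (-(c κ ^ 2 / 2))) ≤ Real.exp (-(C / 2)) := by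
    apply Real.exp_le_exp.2
    nlinarith
  have h6 : B * Real.exp (-(C / 2)) ≤ ε := by
    have hCl : 2 * Real.log (B / ε) ≤ C := le_trans (le_max_right _ _) hC
    have hexp : Real.exp (-(C / 2)) ≤ Real.exp (-(Real.log (B / ε))) :=
      Real.exp_le_exp.2 (by linarith)
    have hlog : Real.exp (-(Real.log (B / ε))) = ε / B := by
      rw [Real.exp_neg, Real.exp_log (by positivity), inv_div]
    calc B * Real.exp (-(C / 2)) ≤ B * (ε / B) :=
          mul_le_mul_of_nonneg_left (hexp.trans_eq hlog) hB0.le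
      _ = ε := by field_simp
  calc matNorm (coalA s (c κ) ^ r - ancientP s) ≤ B * t ^ r := h1
    _ ≤ B * Real.exp (-(C / 2)) :=
        mul_le_mul_of_nonneg_left (le_trans h3 (h4 ▸ h5)) hB0.le
    _ ≤ ε := h6
end

section
/- (Quantitative absorption bound proved in Step ii of the proof of Theorem 1.3.) For every real c with 0 < c and s(s−1)c²/2 ≤ 1, every integer r ≥ 1 and every state (n,m) ∈ S: Σ_{(n̄,m̄)∈S} |((A_c)^r)_{(n,m),(n̄,m̄)} − P_{(n,m),(n̄,m̄)}| ≤ 2(s−1)/(c²·r). In particular ‖(A_c)^r − P‖ ≤ 2(s−1)/(c²·r). -/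
open scoped Topology

section Helpers
open Finset
variable {s : ℕ}

lemma sb_ext {e f : SBState s} (h1 : e.n = f.n) (h2 : e.m = f.m) : e = f :=
  Subtype.ext (Prod.ext (Fin.ext h1) (Fin.ext h2))

lemma sb_eq_iff {e f : SBState s} : e = f ↔ e.n = f.n ∧ e.m = f.m :=
  ⟨fun h => by subst h; exact ⟨rfl, rfl⟩, fun ⟨h1, h2⟩ => sb_ext h1 h2⟩

lemma n_add_m_le (e : SBState s) : e.n + e.m ≤ s := e.2

/-- transition probability -/
noncomputable def pc (c : ℝ) (e : SBState s) : ℝ := (e.n : ℝ) * ((e.n : ℝ) - 1) * c ^ 2 / 2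

/-- the state (n-1, m) -/
def dnS (e : SBState s) : SBState s :=
  ⟨(⟨e.n - 1, by have := n_add_m_le e; omega⟩, e.1.2), by
    have := n_add_m_le e
    show e.n - 1 + e.m ≤ s
    omega⟩

@[simp] lemma dnS_n (e : SBState s) : (dnS e).n = e.n - 1 := rfl
@[simp] lemma dnS_m (e : SBState s) : (dnS e).m = e.m := rfl

end Helpers
section Rows
open Finset
variable {s : ℕ} {c : ℝ}

lemma dnS_ne {e : SBState s} (he : 2 ≤ e.n) : dnS e ≠ e := by
  intro h
  have := congrArg SBState.n h
  simp only [dnS_n] at this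
  omega

lemma coalA_row_two {e : SBState s} (he : 2 ≤ e.n) (f : SBState s) :
    coalA s c e f = if f = dnS e then pc c e else if f = e then 1 - pc c e else 0 := by
  have h1 : (f = dnS e) ↔ (f.n + 1 = e.n ∧ f.m = e.m) := by
    rw [sb_eq_iff, dnS_n, dnS_m]; omega
  have h2 : (f = e) ↔ (f.n = e.n ∧ f.m = e.m) := sb_eq_iff
  simp only [coalA, pc, h1, h2]
  split_ifs with a b c d e' <;> first | rfl | omega | (exfalso; omega)

lemma coalA_row_one {e : SBState s} (he : e.n ≤ 1) (f : SBState s) :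
    coalA s c e f = if f = e then 1 else 0 := by
  have h2 : (f = e) ↔ (f.n = e.n ∧ f.m = e.m) := sb_eq_iff
  simp only [coalA, h2]
  have hz : ((e.n : ℝ) * ((e.n : ℝ) - 1)) = 0 := by
    interval_cases h : e.n <;> norm_num
  split_ifs with a b <;> first | omega | (rw [hz]; ring) | rfl

lemma pc_nonneg (hc : 0 < c) (e : SBState s) : 0 ≤ pc c e := by
  unfold pc
  rcases Nat.eq_zero_or_pos e.n with h | h
  · rw [h]; norm_num
  · have h1 : (1 : ℝ) ≤ (e.n : ℝ) := by exact_mod_cast h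
    have h2 := sq_nonneg c
    have := div_nonneg (mul_nonneg (mul_nonneg (by linarith : (0:ℝ) ≤ (e.n:ℝ))
      (by linarith : (0:ℝ) ≤ (e.n:ℝ) - 1)) h2) (by norm_num : (0:ℝ) ≤ 2)
    linarith

lemma pc_le_one (hbd : (s : ℝ) * ((s : ℝ) - 1) * c ^ 2 / 2 ≤ 1) (e : SBState s) :
    pc c e ≤ 1 := by
  have hns : (e.n : ℝ) ≤ (s : ℝ) := by
    exact_mod_cast le_trans (Nat.le_add_right _ _) (n_add_m_le e)
  refine le_trans ?_ hbd
  unfold pc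
  have : (e.n : ℝ) * ((e.n : ℝ) - 1) ≤ (s : ℝ) * ((s : ℝ) - 1) := by
    rcases Nat.eq_zero_or_pos e.n with h | h
    · rw [h]
      push_cast
      rcases Nat.eq_zero_or_pos s with h' | h'
      · rw [h']; norm_num
      · have : (1:ℝ) ≤ s := by exact_mod_cast h'
        nlinarith
    · have h1 : (1 : ℝ) ≤ (e.n : ℝ) := by exact_mod_cast h
      nlinarith
  have hc2 : (0:ℝ) ≤ c ^ 2 := sq_nonneg c
  nlinarith

lemma coalA_nonneg (hc : 0 < c) (hbd : (s : ℝ) * ((s : ℝ) - 1) * c ^ 2 / 2 ≤ 1)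
    (e f : SBState s) : 0 ≤ coalA s c e f := by
  have h1 := pc_nonneg hc e
  have h2 := pc_le_one hbd e
  unfold pc at h1 h2
  unfold coalA
  split_ifs <;> linarith

end Rows
section Step
open Finset
variable {s : ℕ} {c : ℝ}

/-- Lyapunov function: expected absorption time. -/
noncomputable def hfun (c : ℝ) (e : SBState s) : ℝ := 2 / c ^ 2 * (1 - 1 / (e.n : ℝ))

/-- indicator of unabsorbed states -/
noncomputable def ind (e : SBState s) : ℝ := if 2 ≤ e.n then 1 else 0

lemma ind_nonneg (e : SBState s) : 0 ≤ ind e := by unfold ind; split_ifs <;> norm_num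
lemma ind_le_one (e : SBState s) : ind e ≤ 1 := by unfold ind; split_ifs <;> norm_num

lemma hfun_nonneg (hc : 0 < c) (e : SBState s) : 0 ≤ hfun c e := by
  unfold hfun
  have h1 : 1 / (e.n : ℝ) ≤ 1 := by
    rcases Nat.eq_zero_or_pos e.n with h | h
    · rw [h]; norm_num
    · have : (1:ℝ) ≤ (e.n : ℝ) := by exact_mod_cast h
      rw [div_le_one (by linarith)]; linarith
  have h2 : (0:ℝ) < 2 / c ^ 2 := by positivity
  nlinarith

lemma sum_row_two {e : SBState s} (he : 2 ≤ e.n) (g : SBState s → ℝ) :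
    ∑ f : SBState s, coalA s c e f * g f = pc c e * g (dnS e) + (1 - pc c e) * g e := by
  have hne : dnS e ≠ e := dnS_ne he
  have key : ∀ f : SBState s, coalA s c e f * g f =
      (if f = dnS e then pc c e * g f else 0) + (if f = e then (1 - pc c e) * g f else 0) := by
    intro f
    rw [coalA_row_two he f]
    split_ifs with h1 h2 <;> first | (exfalso; rw [h1] at h2; exact hne h2) | ring
  simp only [key, Finset.sum_add_distrib, Finset.sum_ite_eq', Finset.mem_univ, if_true]

lemma sum_row_one {e : SBState s} (he : e.n ≤ 1) (g : SBState s → ℝ) :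
    ∑ f : SBState s, coalA s c e f * g f = g e := by
  have key : ∀ f : SBState s, coalA s c e f * g f = if f = e then g f else 0 := by
    intro f
    rw [coalA_row_one he f]
    split_ifs <;> ring
  simp only [key, Finset.sum_ite_eq', Finset.mem_univ, if_true]

lemma sum_row_eq_one (hbd : (s : ℝ) * ((s : ℝ) - 1) * c ^ 2 / 2 ≤ 1) (e : SBState s) :
    ∑ f : SBState s, coalA s c e f = 1 := by
  rcases le_or_gt e.n 1 with h | h
  · simpa using sum_row_one (c := c) h (fun _ => (1:ℝ))
  · have h2 := sum_row_two (c := c) h (fun _ => (1:ℝ))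
    simp only [mul_one] at h2
    rw [h2]; ring
lemma step_drift (hc : 0 < c) (e : SBState s) :
    ∑ f : SBState s, coalA s c e f * hfun c f = hfun c e - ind e := by
  rcases le_or_gt e.n 1 with h | h
  · rw [sum_row_one h]
    have : ind e = 0 := by unfold ind; rw [if_neg (by omega)]
    rw [this, sub_zero]
  · rw [sum_row_two h]
    have h2 : (2:ℝ) ≤ (e.n : ℝ) := by exact_mod_cast h
    have hd : ((dnS e).n : ℝ) = (e.n : ℝ) - 1 := by
      rw [dnS_n]
      have : (1:ℕ) ≤ e.n := by omega
      push_cast [this]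
      ring
    have hie : ind e = 1 := by unfold ind; rw [if_pos (show 2 ≤ e.n by omega)]
    unfold pc hfun
    rw [hd, hie]
    have hc2 : c ^ 2 ≠ 0 := by positivity
    have hn0 : (e.n : ℝ) ≠ 0 := by linarith
    have hn1 : (e.n : ℝ) - 1 ≠ 0 := by intro hh; rw [sub_eq_zero] at hh; linarith
    field_simp
    ring

lemma step_ind (hc : 0 < c) (hbd : (s : ℝ) * ((s : ℝ) - 1) * c ^ 2 / 2 ≤ 1) (e : SBState s) :
    ∑ f : SBState s, coalA s c e f * ind f ≤ ind e := by
  rcases le_or_gt e.n 1 with h | h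
  · rw [sum_row_one h]
  · rw [sum_row_two h]
    have h1 := pc_nonneg hc e
    have h2 := pc_le_one hbd e
    have h3 := ind_le_one (dnS e)
    have h4 := ind_nonneg (dnS e)
    have hie : ind e = 1 := by unfold ind; rw [if_pos (show 2 ≤ e.n by omega)]
    rw [hie]
    nlinarith

lemma step_supp {e f : SBState s} (hA : coalA s c e f ≠ 0) :
    f.m = e.m ∧ (1 ≤ e.n → 1 ≤ f.n) := by
  unfold coalA at hA
  split_ifs at hA with h1 h2
  · exact ⟨h1.2.2, fun _ => by omega⟩
  · exact ⟨h2.2, fun hh => by omega⟩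
  · exact absurd rfl hA
end Step
section Pow
open Finset
variable {s : ℕ} {c : ℝ}

/-- `r`-step expectation of `g` started at `e`. -/
noncomputable def Tap (s : ℕ) (c : ℝ) (r : ℕ) (g : SBState s → ℝ) (e : SBState s) : ℝ :=
  ∑ f : SBState s, (coalA s c ^ r) e f * g f

lemma Tap_succ (r : ℕ) (g : SBState s → ℝ) (e : SBState s) :
    Tap s c (r+1) g e = Tap s c r (fun x => ∑ f : SBState s, coalA s c x f * g f) e := by
  unfold Tap
  rw [pow_succ]
  simp only [Matrix.mul_apply, Finset.sum_mul]
  rw [Finset.sum_comm]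
  refine Finset.sum_congr rfl fun x _ => ?_
  rw [Finset.mul_sum]
  refine Finset.sum_congr rfl fun f _ => ?_
  ring

lemma Tap_zero (g : SBState s → ℝ) (e : SBState s) : Tap s c 0 g e = g e := by
  unfold Tap
  simp only [pow_zero, Matrix.one_apply]
  have : ∀ f : SBState s, (if e = f then (1:ℝ) else 0) * g f = if f = e then g f else 0 := by
    intro f
    rcases eq_or_ne e f with h | h
    · subst h; simp
    · rw [if_neg h, if_neg (Ne.symm h)]; ring
  simp only [this, Finset.sum_ite_eq', Finset.mem_univ, if_true]

lemma Tap_congr (r : ℕ) {g k : SBState s → ℝ} (h : ∀ x, g x = k x) (e : SBState s) :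
    Tap s c r g e = Tap s c r k e := by
  unfold Tap; exact Finset.sum_congr rfl fun f _ => by rw [h f]

lemma Tap_sub (r : ℕ) (g k : SBState s → ℝ) (e : SBState s) :
    Tap s c r (fun x => g x - k x) e = Tap s c r g e - Tap s c r k e := by
  unfold Tap
  rw [← Finset.sum_sub_distrib]
  exact Finset.sum_congr rfl fun f _ => by ring

lemma pow_nonneg' (hc : 0 < c) (hbd : (s : ℝ) * ((s : ℝ) - 1) * c ^ 2 / 2 ≤ 1) (r : ℕ)
    (e f : SBState s) : 0 ≤ (coalA s c ^ r) e f := by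
  induction r generalizing e f with
  | zero =>
    simp only [pow_zero, Matrix.one_apply]
    split_ifs <;> norm_num
  | succ r ih =>
    rw [pow_succ, Matrix.mul_apply]
    exact Finset.sum_nonneg fun x _ => mul_nonneg (ih e x) (coalA_nonneg hc hbd x f)

lemma Tap_mono (hc : 0 < c) (hbd : (s : ℝ) * ((s : ℝ) - 1) * c ^ 2 / 2 ≤ 1) (r : ℕ)
    {g k : SBState s → ℝ} (h : ∀ x, g x ≤ k x) (e : SBState s) :
    Tap s c r g e ≤ Tap s c r k e :=
  Finset.sum_le_sum fun f _ =>
    mul_le_mul_of_nonneg_left (h f) (pow_nonneg' hc hbd r e f)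

lemma pow_row_sum (hbd : (s : ℝ) * ((s : ℝ) - 1) * c ^ 2 / 2 ≤ 1) (r : ℕ) (e : SBState s) :
    Tap s c r (fun _ => (1:ℝ)) e = 1 := by
  induction r generalizing e with
  | zero => rw [Tap_zero]
  | succ r ih =>
    rw [Tap_succ, Tap_congr r (fun x => by
      simp only [mul_one]; exact sum_row_eq_one hbd x), ih e]

lemma pow_supp (r : ℕ) {e f : SBState s} (hA : (coalA s c ^ r) e f ≠ 0) :
    f.m = e.m ∧ (1 ≤ e.n → 1 ≤ f.n) := by
  induction r generalizing e f with
  | zero =>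
    simp only [pow_zero, Matrix.one_apply] at hA
    split_ifs at hA with h
    · subst h; exact ⟨rfl, fun h => h⟩
    · exact absurd rfl hA
  | succ r ih =>
    rw [pow_succ, Matrix.mul_apply] at hA
    obtain ⟨x, -, hx⟩ := Finset.exists_ne_zero_of_sum_ne_zero hA
    have h1 := ih (e := e) (f := x) (left_ne_zero_of_mul hx)
    have h2 := step_supp (right_ne_zero_of_mul hx)
    exact ⟨h2.1.trans h1.1, fun h => h2.2 (h1.2 h)⟩

lemma pow_drift (hc : 0 < c) (r : ℕ) (e : SBState s) :
    Tap s c r (hfun c) e = hfun c e - ∑ j ∈ Finset.range r, Tap s c j ind e := by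
  induction r generalizing e with
  | zero => rw [Tap_zero]; simp
  | succ r ih =>
    rw [Tap_succ, Tap_congr r (fun x => step_drift hc x), Tap_sub, ih e,
      Finset.sum_range_succ]
    ring

lemma u_succ_le (hc : 0 < c) (hbd : (s : ℝ) * ((s : ℝ) - 1) * c ^ 2 / 2 ≤ 1)
    (r : ℕ) (e : SBState s) : Tap s c (r+1) ind e ≤ Tap s c r ind e := by
  rw [Tap_succ]
  exact Tap_mono hc hbd r (fun x => step_ind hc hbd x) e

lemma u_anti (hc : 0 < c) (hbd : (s : ℝ) * ((s : ℝ) - 1) * c ^ 2 / 2 ≤ 1)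
    {j r : ℕ} (hjr : j ≤ r) (e : SBState s) : Tap s c r ind e ≤ Tap s c j ind e := by
  induction r, hjr using Nat.le_induction with
  | base => exact le_refl _
  | succ r hjr ih => exact le_trans (u_succ_le hc hbd r e) ih

lemma key_bound (hc : 0 < c) (hbd : (s : ℝ) * ((s : ℝ) - 1) * c ^ 2 / 2 ≤ 1)
    (r : ℕ) (e : SBState s) : (r : ℝ) * Tap s c r ind e ≤ hfun c e := by
  have h1 : ∑ j ∈ Finset.range r, Tap s c j ind e ≤ hfun c e := by
    have h2 := pow_drift hc (s := s) r e
    have h3 : 0 ≤ Tap s c r (hfun c) e :=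
      Finset.sum_nonneg fun f _ =>
        mul_nonneg (pow_nonneg' hc hbd r e f) (hfun_nonneg hc f)
    linarith
  calc (r : ℝ) * Tap s c r ind e
      = ∑ _j ∈ Finset.range r, Tap s c r ind e := by
        rw [Finset.sum_const, Finset.card_range, nsmul_eq_mul]
    _ ≤ ∑ j ∈ Finset.range r, Tap s c j ind e :=
        Finset.sum_le_sum fun j hj => u_anti hc hbd (le_of_lt (Finset.mem_range.mp hj)) e
    _ ≤ hfun c e := h1

end Pow
section Final
open Finset
variable {s : ℕ} {c : ℝ}

lemma pow_absorbed {e : SBState s} (he : e.n ≤ 1) (r : ℕ) (f : SBState s) :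
    (coalA s c ^ r) e f = if f = e then 1 else 0 := by
  induction r generalizing f with
  | zero =>
    simp only [pow_zero, Matrix.one_apply]
    rcases eq_or_ne e f with h | h
    · subst h; simp
    · rw [if_neg h, if_neg (Ne.symm h)]
  | succ r ih =>
    rw [pow_succ, Matrix.mul_apply]
    have : ∀ x : SBState s, (coalA s c ^ r) e x * coalA s c x f =
        if x = e then coalA s c x f else 0 := by
      intro x; rw [ih x]; split_ifs <;> ring
    simp only [this, Finset.sum_ite_eq', Finset.mem_univ, if_true]
    exact coalA_row_one he f

lemma ancientP_absorbed {e : SBState s} (he : e.n ≤ 1) (f : SBState s) :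
    ancientP s e f = if f = e then 1 else 0 := by
  have hfe : (f = e) ↔ (f.n = e.n ∧ f.m = e.m) := sb_eq_iff
  unfold ancientP
  simp only [hfe]
  split_ifs <;> first | rfl | omega

lemma hfun_le {e : SBState s} (hc : 0 < c) (he : 2 ≤ e.n) :
    hfun c e ≤ ((s : ℝ) - 1) / c ^ 2 := by
  have hn2 : (2:ℝ) ≤ (e.n : ℝ) := by exact_mod_cast he
  have hns : ((e.n : ℝ)) ≤ (s : ℝ) := by
    exact_mod_cast le_trans (Nat.le_add_right _ _) (n_add_m_le e)
  have hnpos : (0:ℝ) < (e.n : ℝ) := by linarith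
  have hc2 : (0:ℝ) < c ^ 2 := by positivity
  have h4 : ((3:ℝ) - (e.n : ℝ)) * (e.n : ℝ) ≤ 2 := by nlinarith
  have h5 : (3:ℝ) - (e.n : ℝ) ≤ 2 / (e.n : ℝ) := (le_div_iff₀ hnpos).mpr h4
  have h6 : 2 * (1 - 1 / (e.n : ℝ)) ≤ (s : ℝ) - 1 := by
    have : 2 / (e.n : ℝ) = 2 * (1 / (e.n : ℝ)) := by ring
    linarith [this ▸ h5]
  unfold hfun
  have heq : 2 / c ^ 2 * (1 - 1 / (e.n : ℝ)) = (2 * (1 - 1 / (e.n : ℝ))) / c ^ 2 := by ring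
  rw [heq]
  exact (div_le_div_iff_of_pos_right hc2).mpr h6

/-- The main row bound. -/
lemma main_row_bound (hs : 1 ≤ s) (hc : 0 < c)
    (hbd : (s : ℝ) * ((s : ℝ) - 1) * c ^ 2 / 2 ≤ 1) (r : ℕ) (hr : 1 ≤ r) (e : SBState s) :
    ∑ f : SBState s, |(coalA s c ^ r - ancientP s) e f| ≤
      2 * ((s : ℝ) - 1) / (c ^ 2 * r) := by
  have hrpos : (0:ℝ) < (r : ℝ) := by exact_mod_cast hr
  have hc2 : (0:ℝ) < c ^ 2 := by positivity
  have hs1 : (1:ℝ) ≤ (s : ℝ) := by exact_mod_cast hs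
  rcases le_or_gt e.n 1 with he | he
  · have hz : ∀ f : SBState s, |(coalA s c ^ r - ancientP s) e f| = 0 := by
      intro f
      rw [Matrix.sub_apply, pow_absorbed he r f, ancientP_absorbed he f, sub_self, abs_zero]
    rw [Finset.sum_congr rfl fun f _ => hz f, Finset.sum_const, smul_zero]
    exact div_nonneg (by linarith) (by positivity)
  · -- e.n ≥ 2
    have he2 : 2 ≤ e.n := he
    have hem : 1 + e.m ≤ s := by have := n_add_m_le e; omega
    set f₀ : SBState s := ⟨(⟨1, by omega⟩, e.1.2), hem⟩ with hf₀
    have hf₀n : f₀.n = 1 := rfl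
    have hf₀m : f₀.m = e.m := rfl
    have hP : ∀ f : SBState s, ancientP s e f = if f = f₀ then 1 else 0 := by
      intro f
      have hff : (f = f₀) ↔ (f.n = 1 ∧ f.m = e.m) := by
        rw [sb_eq_iff, hf₀n, hf₀m]
      unfold ancientP
      simp only [hff]
      split_ifs <;> first | rfl | omega
    have hA1 : ∑ f : SBState s, (coalA s c ^ r) e f = 1 := by
      have := pow_row_sum (c := c) hbd r e
      unfold Tap at this
      simpa using this
    have hnn : ∀ f : SBState s, 0 ≤ (coalA s c ^ r) e f := pow_nonneg' hc hbd r e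
    have hf0le : (coalA s c ^ r) e f₀ ≤ 1 := by
      rw [← hA1]
      exact Finset.single_le_sum (fun f _ => hnn f) (Finset.mem_univ f₀)
    have herase : ∑ f ∈ Finset.univ.erase f₀, (coalA s c ^ r) e f =
        1 - (coalA s c ^ r) e f₀ := by
      have h := Finset.add_sum_erase Finset.univ (fun f => (coalA s c ^ r) e f)
        (Finset.mem_univ f₀)
      rw [hA1] at h
      linarith
    have hsplit : ∑ f : SBState s, |(coalA s c ^ r - ancientP s) e f| =
        2 * (1 - (coalA s c ^ r) e f₀) := by
      rw [← Finset.add_sum_erase Finset.univ _ (Finset.mem_univ f₀)]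
      have h1 : |(coalA s c ^ r - ancientP s) e f₀| = 1 - (coalA s c ^ r) e f₀ := by
        rw [Matrix.sub_apply, hP f₀, if_pos rfl, abs_of_nonpos (by linarith), neg_sub]
      have h2 : ∑ f ∈ Finset.univ.erase f₀, |(coalA s c ^ r - ancientP s) e f| =
          ∑ f ∈ Finset.univ.erase f₀, (coalA s c ^ r) e f := by
        refine Finset.sum_congr rfl fun f hf => ?_
        have hne := (Finset.mem_erase.mp hf).1
        rw [Matrix.sub_apply, hP f, if_neg hne, sub_zero, abs_of_nonneg (hnn f)]
      rw [h1, h2, herase]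
      ring
    have herase_le : ∑ f ∈ Finset.univ.erase f₀, (coalA s c ^ r) e f ≤ Tap s c r ind e := by
      unfold Tap
      rw [← Finset.add_sum_erase Finset.univ (fun f => (coalA s c ^ r) e f * ind f)
        (Finset.mem_univ f₀)]
      have h0 : 0 ≤ (coalA s c ^ r) e f₀ * ind f₀ := mul_nonneg (hnn f₀) (ind_nonneg f₀)
      have hterm : ∀ f ∈ Finset.univ.erase f₀,
          (coalA s c ^ r) e f ≤ (coalA s c ^ r) e f * ind f := by
        intro f hf
        rcases eq_or_ne ((coalA s c ^ r) e f) 0 with h | h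
        · rw [h]; simp
        · have hsupp := pow_supp r h
          have hm : f.m = e.m := hsupp.1
          have hn : 1 ≤ f.n := hsupp.2 (by omega)
          have hne := (Finset.mem_erase.mp hf).1
          have h2n : 2 ≤ f.n := by
            by_contra hcon
            exact hne (sb_ext (by omega) (by rw [hm, hf₀m]))
          have : ind f = 1 := if_pos h2n
          rw [this, mul_one]
      have := Finset.sum_le_sum hterm
      linarith
    have hu0 : 0 ≤ Tap s c r ind e :=
      Finset.sum_nonneg fun f _ => mul_nonneg (hnn f) (ind_nonneg f)
    have hkey := key_bound hc hbd r e
    have hfe := hfun_le (s := s) hc he2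
    have h6 : (r : ℝ) * Tap s c r ind e ≤ ((s:ℝ) - 1) / c ^ 2 := le_trans hkey hfe
    have h7 : Tap s c r ind e ≤ ((s:ℝ) - 1) / (c ^ 2 * (r:ℝ)) := by
      rw [le_div_iff₀ (by positivity)]
      calc Tap s c r ind e * (c ^ 2 * (r:ℝ)) = ((r:ℝ) * Tap s c r ind e) * c ^ 2 := by ring
        _ ≤ (((s:ℝ) - 1) / c ^ 2) * c ^ 2 := by
            exact mul_le_mul_of_nonneg_right h6 (le_of_lt hc2)
        _ = (s:ℝ) - 1 := by field_simp
    rw [hsplit]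
    have : 2 * (((s:ℝ) - 1) / (c ^ 2 * (r:ℝ))) = 2 * ((s:ℝ) - 1) / (c ^ 2 * (r:ℝ)) := by ring
    linarith [this ▸ (by linarith [herase_le, herase, h7] :
      2 * (1 - (coalA s c ^ r) e f₀) ≤ 2 * (((s:ℝ) - 1) / (c ^ 2 * (r:ℝ))))]

end Final

/-- (Quantitative absorption bound in Step ii of the proof of
Theorem 1.3.) For `0 < c` with `s(s−1)c²/2 ≤ 1`, every `r ≥ 1` and every state `e ∈ S`,
`Σ_f |((A_c)^r − P)_{e,f}| ≤ 2(s−1)/(c²·r)`; in particular `‖(A_c)^r − P‖ ≤ 2(s−1)/(c²·r)`. -/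
theorem coalA_pow_sub_projection_bound (s : ℕ) (hs : 1 ≤ s) (K : ℝ) (hK : 0 < K)
    (c : ℝ) (hc : 0 < c) (hbd : (s : ℝ) * ((s : ℝ) - 1) * c ^ 2 / 2 ≤ 1)
    (r : ℕ) (hr : 1 ≤ r) :
    (∀ e : SBState s,
        ∑ f : SBState s, |(coalA s c ^ r - ancientP s) e f| ≤
          2 * ((s : ℝ) - 1) / (c ^ 2 * r)) ∧
      matNorm (coalA s c ^ r - ancientP s) ≤ 2 * ((s : ℝ) - 1) / (c ^ 2 * r) := by
  have hmain : ∀ e : SBState s,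
      ∑ f : SBState s, |(coalA s c ^ r - ancientP s) e f| ≤
        2 * ((s : ℝ) - 1) / (c ^ 2 * r) := fun e => main_row_bound hs hc hbd r hr e
  refine ⟨hmain, ?_⟩
  unfold matNorm
  exact Finset.sup'_le _ _ fun e _ => hmain e
end

section
/- (Transition probability expansion, Step ii of the proof of Theorem 1.3: the decomposition Π_κ = A_κ + B_κ/b_κ with B_κ → B.) For every pair of states e, f ∈ S: lim_{c→0⁺} c^{-3}·( exp(c²·G^c) − A_c )_{e,f} = B_{e,f}. Equivalently, the transition matrix over a time step of length c² of the block-counting process of the seed bank coalescent with migration rate c equals A_c + c³·B + o(c³) entrywise as c → 0⁺. -/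
/-!
Splitting off the migration terms, `G^c = G^0 + c • B`, and `A_c = 1 + c² • G^0` is the first-order
Taylor polynomial of `exp` at the pure-coalescence part. Hence
`exp (c² • G^c) - A_c = c³ • B + (exp x - 1 - x)` with `x = c² • G^c = O(c²)`, and the
exponential remainder is `O(‖x‖²) = O(c⁴) = o(c³)`. This holds in any complete normed algebra;
matrix entries then converge because entry evaluation is continuous.
-/

open scoped Topology

/-- The matrix `B`, the limit of the slow (migration) part `B_κ` of the decomposition
`Π_κ = A_κ + B_κ/b_κ`. -/
noncomputable def migB (s : ℕ) (K : ℝ) : Matrix (SBState s) (SBState s) ℝ :=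
  fun e f =>
    if 1 ≤ e.n ∧ f.n + 1 = e.n ∧ f.m = e.m + 1 then (e.n : ℝ)
    else if 1 ≤ e.m ∧ f.n = e.n + 1 ∧ f.m + 1 = e.m then K * e.m
    else if f.n = e.n ∧ f.m = e.m then -(e.n : ℝ) - K * e.m
    else 0

open Filter Asymptotics

namespace NormedSpace

theorem exp_sub_one_sub_isBigO_sq (𝕂 : Type*) {𝔸 : Type*} [NontriviallyNormedField 𝕂] [CharZero 𝕂]
    [ContinuousSMul ℚ 𝕂] [NormedRing 𝔸] [NormedAlgebra 𝕂 𝔸] [CompleteSpace 𝔸] :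
    (fun x : 𝔸 => exp x - 1 - x) =O[𝓝 0] fun x => ‖x‖ ^ 2 := by
  have h := (exp_hasFPowerSeriesAt_zero (𝕂 := 𝕂) (𝔸 := 𝔸)).isBigO_sub_partialSum_pow 2
  simpa [FormalMultilinearSeries.partialSum, Finset.sum_range_succ, expSeries_apply_eq,
    sub_sub] using h

variable {𝕂 𝔸 : Type*} [NontriviallyNormedField 𝕂] [CharZero 𝕂]
    [ContinuousSMul ℚ 𝕂] [NormedRing 𝔸] [NormedAlgebra 𝕂 𝔸] [CompleteSpace 𝔸]

theorem tendsto_inv_pow_three_smul_exp_sq_smul_sub (a b : 𝔸) :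
    Tendsto (fun c : 𝕂 => (c ^ 3)⁻¹ • (exp (c ^ 2 • (a + c • b)) - 1 - c ^ 2 • a))
      (𝓝[≠] 0) (𝓝 b) := by
  set x : 𝕂 → 𝔸 := fun c => c ^ 2 • (a + c • b) with hx
  have hx_bigO : x =O[𝓝 0] fun c => c ^ 2 := by
    have hbdd : (fun c : 𝕂 => a + c • b) =O[𝓝 0] fun _ => (1 : 𝕂) :=
      (Continuous.tendsto (by fun_prop) 0).isBigO_one 𝕂
    simpa only [smul_eq_mul, mul_one] using (isBigO_refl (fun c : 𝕂 => c ^ 2) _).smul hbdd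
  have hx_tendsto : Tendsto x (𝓝 0) (𝓝 0) :=
    hx_bigO.trans_tendsto (by simpa using (continuous_pow 2).tendsto (0 : 𝕂))
  have hrem : (fun c => exp (x c) - 1 - x c) =o[𝓝 0] fun c : 𝕂 => c ^ 3 := by
    refine ((exp_sub_one_sub_isBigO_sq 𝕂).comp_tendsto hx_tendsto).trans_isLittleO ?_
    refine (hx_bigO.norm_left.pow 2).trans_isLittleO ?_
    simpa [← pow_mul] using isLittleO_pow_pow (𝕜 := 𝕂) (by norm_num : 3 < 4)
  have hsplit : ∀ c : 𝕂, exp (x c) - 1 - c ^ 2 • a = (exp (x c) - 1 - x c) + c ^ 3 • b := by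
    intro c
    simp only [hx, smul_add, smul_smul, ← pow_succ]
    abel
  have hlim := (hrem.mono (nhdsWithin_le_nhds (s := {0}ᶜ))).tendsto_inv_smul_nhds_zero.add_const b
  rw [zero_add] at hlim
  refine hlim.congr' (eventually_nhdsWithin_of_forall fun c (hc : c ≠ 0) => ?_)
  change _ = (c ^ 3)⁻¹ • (exp (x c) - 1 - c ^ 2 • a)
  rw [hsplit, smul_add, inv_smul_smul₀ (pow_ne_zero 3 hc)]

end NormedSpace

lemma SBState.eq_iff_n_eq_and_m_eq {s : ℕ} (e f : SBState s) : e = f ↔ f.n = e.n ∧ f.m = e.m := by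
  constructor
  · rintro rfl
    exact ⟨rfl, rfl⟩
  · rintro ⟨hn, hm⟩
    rw [Subtype.ext_iff, Prod.ext_iff, Fin.ext_iff, Fin.ext_iff]
    exact ⟨hn.symm, hm.symm⟩

lemma seedBankQ_eq_add_smul_migB (s : ℕ) (K c : ℝ) :
    seedBankQ s K c = seedBankQ s K 0 + c • migB s K := by
  ext e f
  simp only [seedBankQ, migB, Matrix.add_apply, Matrix.smul_apply, smul_eq_mul]
  split_ifs <;> first | ring1 | (exfalso; omega)

lemma coalA_eq_one_add_sq_smul_seedBankQ_zero (s : ℕ) (K c : ℝ) :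
    coalA s c = 1 + c ^ 2 • seedBankQ s K 0 := by
  ext e f
  simp only [coalA, seedBankQ, Matrix.add_apply, Matrix.smul_apply, smul_eq_mul,
    Matrix.one_apply, SBState.eq_iff_n_eq_and_m_eq]
  -- the remaining case is a coalescence from `n = 1`, whose rate `n (n - 1) / 2` vanishes
  split_ifs <;>
    first
      | ring1
      | (exfalso; omega)
      | (have hn : SBState.n e = 1 := by omega
         rw [hn]; norm_num)

theorem seedBank_transition_expansion_general (s : ℕ) (K : ℝ)
    (e f : SBState s) :
    Filter.Tendsto
      (fun c : ℝ =>
        (NormedSpace.exp (c ^ 2 • seedBankQ s K c) e f - coalA s c e f) / c ^ 3)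
      (𝓝[>] (0 : ℝ)) (𝓝 (migB s K e f)) := by
  let _ := Matrix.linftyOpNormedRing (n := SBState s) (α := ℝ)
  let _ := Matrix.linftyOpNormedAlgebra (n := SBState s) (R := ℝ) (α := ℝ)
  have hlim := (NormedSpace.tendsto_inv_pow_three_smul_exp_sq_smul_sub (𝕂 := ℝ)
    (seedBankQ s K 0) (migB s K)).mono_left (nhdsGT_le_nhdsNE 0)
  have hentry : Continuous fun M : Matrix (SBState s) (SBState s) ℝ => M e f :=
    (continuous_apply f).comp (continuous_apply e)
  refine (hentry.tendsto _ |>.comp hlim).congr fun c => ?_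
  simp only [Function.comp_apply, ← seedBankQ_eq_add_smul_migB,
    coalA_eq_one_add_sq_smul_seedBankQ_zero s K c, sub_sub, Matrix.smul_apply, Matrix.sub_apply,
    Matrix.add_apply, smul_eq_mul, div_eq_inv_mul]
  -- the sides differ only in the instances of `exp`: `linftyOp` structures vs. the default ones
  rfl

/-- (Transition probability expansion, Step ii of the proof of
Theorem 1.3.) The transition matrix `exp(c²·G^c)` over a time step of length `c²` of the
block-counting process of the seed bank coalescent with migration rate `c` satisfies
`c⁻³·(exp(c²·G^c) − A_c)_{e,f} → B_{e,f}` as `c → 0⁺`, i.e. it equals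
`A_c + c³·B + o(c³)` entrywise. -/
theorem seedBank_transition_expansion (s : ℕ) (hs : 1 ≤ s) (K : ℝ) (hK : 0 < K)
    (e f : SBState s) :
    Filter.Tendsto
      (fun c : ℝ =>
        (NormedSpace.exp (c ^ 2 • seedBankQ s K c) e f - coalA s c e f) / c ^ 3)
      (𝓝[>] (0 : ℝ)) (𝓝 (migB s K e f)) :=
  seedBank_transition_expansion_general s K e f
end

section
/- (Identity (eq:PBP_anc) on the effective state space, used in Step ii of the proof of Theorem 1.3.) The matrices satisfy P·B·P = P·G. In particular, the matrices P·B·P and G have identical rows at every state (n,m) ∈ S with n ≤ 1, i.e. on the range of the projection P. -/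
open scoped Topology

namespace SBHelper

variable {s : ℕ}

lemma sb_le (e : SBState s) : e.n + e.m ≤ s := e.2

lemma eq_iff {e f : SBState s} : e = f ↔ e.n = f.n ∧ e.m = f.m := by
  constructor
  · rintro rfl; exact ⟨rfl, rfl⟩
  · rintro ⟨h1, h2⟩
    exact Subtype.ext (Prod.ext (Fin.ext h1) (Fin.ext h2))

/-- Construct a state from coordinates. -/
def mk' (s : ℕ) (n m : ℕ) (h : n + m ≤ s) : SBState s :=
  ⟨(⟨n, by omega⟩, ⟨m, by omega⟩), by simpa using h⟩

@[simp] lemma n_mk' (n m : ℕ) (h : n + m ≤ s) : (mk' s n m h).n = n := rfl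
@[simp] lemma m_mk' (n m : ℕ) (h : n + m ≤ s) : (mk' s n m h).m = m := rfl

/-- The projection map on states. -/
def proj (e : SBState s) : SBState s :=
  mk' s (min e.n 1) e.m (by have := sb_le e; omega)

@[simp] lemma n_proj (e : SBState s) : (proj e).n = min e.n 1 := rfl
@[simp] lemma m_proj (e : SBState s) : (proj e).m = e.m := rfl

lemma eq_proj_iff {f g : SBState s} : f = proj g ↔ f.n = min g.n 1 ∧ f.m = g.m := by
  rw [eq_iff]; simp only [n_proj, m_proj]

lemma P_apply (e f : SBState s) :
    ancientP s e f = if f = proj e then 1 else 0 := by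
  unfold ancientP
  by_cases hp : f = proj e
  · have h' := eq_proj_iff.mp hp
    split_ifs <;> first | rfl | (exfalso; omega)
  · have h' : ¬(f.n = min e.n 1 ∧ f.m = e.m) := fun hc => hp (eq_proj_iff.mpr hc)
    split_ifs <;> first | rfl | (exfalso; omega)

lemma P_mul_apply (M : Matrix (SBState s) (SBState s) ℝ) (e f : SBState s) :
    (ancientP s * M) e f = M (proj e) f := by
  rw [Matrix.mul_apply]
  rw [Finset.sum_eq_single (proj e)]
  · rw [P_apply, if_pos rfl, one_mul]
  · intro g _ hg
    rw [P_apply, if_neg hg, zero_mul]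
  · intro h; exact absurd (Finset.mem_univ _) h

lemma proj_eq_self {e : SBState s} (he : e.n ≤ 1) : proj e = e := by
  rw [eq_iff]
  refine ⟨?_, rfl⟩
  simp only [n_proj]
  omega

/-- Key identity: on rows with `n ≤ 1`, `B·P` agrees with `G`. -/
lemma BP_eq_G (K : ℝ) (e : SBState s) (he : e.n ≤ 1) (f : SBState s) :
    (migB s K * ancientP s) e f = ancientG s K e f := by
  rw [Matrix.mul_apply]
  by_cases hA : f.n = 1 ∧ f.m + 1 = e.m
  · -- `G e f = K * e.m`; the unique contributing `g` is `(e.n+1, e.m-1)`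
    have hw : (e.n + 1) + (e.m - 1) ≤ s := by have := sb_le e; omega
    rw [Finset.sum_eq_single (mk' s (e.n + 1) (e.m - 1) hw)]
    · rw [P_apply]
      have hf : f = proj (mk' s (e.n + 1) (e.m - 1) hw) := by
        rw [eq_proj_iff]; simp only [n_mk', m_mk']; omega
      rw [if_pos hf, mul_one]
      unfold migB ancientG
      simp only [n_mk', m_mk', true_and, and_true]
      split_ifs <;> first | ring1 | (exfalso; omega)
    · intro g _ hg
      rw [P_apply]
      have hg' : ¬ (g.n = e.n + 1 ∧ g.m = e.m - 1) := by
        intro hc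
        exact hg (by rw [eq_iff]; simp only [n_mk', m_mk']; exact hc)
      by_cases hp : f = proj g
      · rw [if_pos hp, mul_one]
        have hpf := eq_proj_iff.mp hp
        unfold migB
        split_ifs <;> first | rfl | (exfalso; omega)
      · rw [if_neg hp, mul_zero]
    · intro h; exact absurd (Finset.mem_univ _) h
  · by_cases hB : 1 ≤ e.n ∧ f.n = 0 ∧ f.m = e.m + 1
    · -- `G e f = e.n`; contributing `g = (e.n - 1, e.m + 1)`
      have hw : (e.n - 1) + (e.m + 1) ≤ s := by have := sb_le e; omega
      rw [Finset.sum_eq_single (mk' s (e.n - 1) (e.m + 1) hw)]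
      · rw [P_apply]
        have hf : f = proj (mk' s (e.n - 1) (e.m + 1) hw) := by
          rw [eq_proj_iff]; simp only [n_mk', m_mk']; omega
        rw [if_pos hf, mul_one]
        unfold migB ancientG
        simp only [n_mk', m_mk', true_and, and_true]
        split_ifs <;> first | ring1 | (exfalso; omega)
      · intro g _ hg
        rw [P_apply]
        have hg' : ¬ (g.n = e.n - 1 ∧ g.m = e.m + 1) := by
          intro hc
          exact hg (by rw [eq_iff]; simp only [n_mk', m_mk']; exact hc)
        by_cases hp : f = proj g
        · rw [if_pos hp, mul_one]
          have hpf := eq_proj_iff.mp hp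
          unfold migB
          split_ifs <;> first | rfl | (exfalso; omega)
        · rw [if_neg hp, mul_zero]
      · intro h; exact absurd (Finset.mem_univ _) h
    · by_cases hC : f.n = min e.n 1 ∧ f.m = e.m
      · -- diagonal case: contributing `g = e`
        rw [Finset.sum_eq_single e]
        · rw [P_apply]
          have hf : f = proj e := eq_proj_iff.mpr hC
          rw [if_pos hf, mul_one]
          unfold migB ancientG
          split_ifs <;>
            first
              | ring1
              | (exfalso; omega)
              | (have h0 : e.n = 0 := by omega
                 rw [h0]; push_cast; ring)
        · intro g _ hg
          rw [P_apply]
          have hg' : ¬ (g.n = e.n ∧ g.m = e.m) := by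
            intro hc
            exact hg (eq_iff.mpr hc)
          by_cases hp : f = proj g
          · rw [if_pos hp, mul_one]
            have hpf := eq_proj_iff.mp hp
            unfold migB
            split_ifs <;> first | rfl | (exfalso; omega)
          · rw [if_neg hp, mul_zero]
        · intro h; exact absurd (Finset.mem_univ _) h
      · -- `G e f = 0` and every summand vanishes
        have hG : ancientG s K e f = 0 := by
          unfold ancientG
          split_ifs <;> first | rfl | (exfalso; omega)
        rw [hG]
        apply Finset.sum_eq_zero
        intro g _
        rw [P_apply]
        by_cases hp : f = proj g
        · rw [if_pos hp, mul_one]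
          have hpf := eq_proj_iff.mp hp
          unfold migB
          split_ifs <;> first | rfl | (exfalso; omega)
        · rw [if_neg hp, mul_zero]

end SBHelper

open SBHelper in

/-- (Identity (eq:PBP_anc), used in Step ii of the proof of
Theorem 1.3.) The matrices satisfy `P·B·P = P·G`; in particular `P·B·P` and `G` have
identical rows at every state `(n,m) ∈ S` with `n ≤ 1`, i.e. on the range of `P`. -/
theorem ancient_PBP_eq_PG (s : ℕ) (hs : 1 ≤ s) (K : ℝ) (hK : 0 < K) :
    ancientP s * migB s K * ancientP s = ancientP s * ancientG s K ∧
      ∀ e : SBState s, e.n ≤ 1 →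
        ∀ f : SBState s, (ancientP s * migB s K * ancientP s) e f = ancientG s K e f := by
  have key : ∀ e f : SBState s,
      (ancientP s * migB s K * ancientP s) e f = (ancientP s * ancientG s K) e f := by
    intro e f
    rw [Matrix.mul_assoc, P_mul_apply, P_mul_apply]
    exact BP_eq_G K (proj e) (by simp only [n_proj]; omega) f
  refine ⟨Matrix.ext key, fun e he f => ?_⟩
  rw [key e f, P_mul_apply, proj_eq_self he]
end
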